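/- arXiv:1802.04924 — 4 statements merged into one kernel-verified Lean document; each statement's English description precedes it below -/
import Mathlib

section
/- Let G be a computation graph and suppose the layer l_j has exactly one in-edge e1 = (l_i, l_j) and exactly one out-edge e2 = (l_j, l_k) in G, with l_i, l_j, l_k pairwise distinct. Let G' be the graph obtained from G by node elimination at l_j: G' has layer set V \ {l_j}, edge multiset (E \ {e1, e2}) together with one new edge e' = (l_i, l_k), whose cost function is defined by t_x(e', c_i, c_k) = min over c_j in C(l_j) of [ t_c(l_j, c_j) + t_s(l_j, c_j) + t_x(e1, c_i, c_j) + t_x(e2, c_j, c_k) ]. Then for every strategy S on G, the total cost of S on G is at least the total cost on G' of the restriction of S to V \ {l_j}; that is, t_o(G, S) ≥ t_o(G', S restricted to V \ {l_j}). -/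
open Finset

/-- A computation graph: a finite set `V` of layers, a finite nonempty
configuration set `C l` for each layer, node cost functions `tc`, `ts`,
a finite (indexed) set `E` of directed edges with source `src`, destination
`dst` (distinct endpoints, both in `V`), and an edge cost function `tx`. -/
structure CompGraph (L Conf ε : Type) where
  V : Finset L
  C : L → Finset Conf
  C_ne : ∀ l ∈ V, (C l).Nonempty
  tc : L → Conf → ℝ
  ts : L → Conf → ℝ
  E : Finset ε
  src : ε → L
  dst : ε → L
  src_mem : ∀ e ∈ E, src e ∈ V
  dst_mem : ∀ e ∈ E, dst e ∈ V
  src_ne_dst : ∀ e ∈ E, src e ≠ dst e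
  tx : ε → Conf → Conf → ℝ

namespace CompGraph

variable {L Conf ε : Type}

/-- A parallelization strategy assigns to each layer `l ∈ V` a configuration in `C l`. -/
def IsStrategy (G : CompGraph L Conf ε) (S : L → Conf) : Prop :=
  ∀ l ∈ G.V, S l ∈ G.C l

/-- The total cost `t_o(G, S)` of a strategy `S` on `G`. -/
def cost (G : CompGraph L Conf ε) (S : L → Conf) : ℝ :=
  ∑ l ∈ G.V, (G.tc l (S l) + G.ts l (S l)) +
    ∑ e ∈ G.E, G.tx e (S (G.src e)) (S (G.dst e))

/-- A strategy is optimal for `G` if it is a strategy and its total cost is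
at most that of every strategy on `G`. -/
def Optimal (G : CompGraph L Conf ε) (S : L → Conf) : Prop :=
  G.IsStrategy S ∧ ∀ S₁, G.IsStrategy S₁ → G.cost S ≤ G.cost S₁

end CompGraph

/-- `G'` is obtained from `G` by node elimination at `l_j`, where `e1 = (l_i, l_j)`
is the unique in-edge of `l_j` and `e2 = (l_j, l_k)` its unique out-edge, and `e'`
is the fresh edge `(l_i, l_k)` whose cost is defined by dynamic programming over
the configurations of `l_j`. -/
structure NodeElim {L Conf ε : Type} [DecidableEq L] [DecidableEq ε]
    (G G' : CompGraph L Conf ε) (li lj lk : L) (e1 e2 e' : ε) : Prop where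
  hij : li ≠ lj
  hjk : lj ≠ lk
  hik : li ≠ lk
  hjV : lj ∈ G.V
  he1 : e1 ∈ G.E
  he2 : e2 ∈ G.E
  src1 : G.src e1 = li
  dst1 : G.dst e1 = lj
  src2 : G.src e2 = lj
  dst2 : G.dst e2 = lk
  in_unique : ∀ e ∈ G.E, G.dst e = lj → e = e1
  out_unique : ∀ e ∈ G.E, G.src e = lj → e = e2
  fresh : e' ∉ G.E
  V' : G'.V = G.V.erase lj
  E' : G'.E = insert e' ((G.E.erase e1).erase e2)
  C' : G'.C = G.C
  tc' : G'.tc = G.tc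
  ts' : G'.ts = G.ts
  src'_new : G'.src e' = li
  dst'_new : G'.dst e' = lk
  src_eq : ∀ e, e ≠ e' → G'.src e = G.src e
  dst_eq : ∀ e, e ≠ e' → G'.dst e = G.dst e
  tx_eq : ∀ e, e ≠ e' → G'.tx e = G.tx e
  tx_new : ∀ ci ck, G'.tx e' ci ck =
    (G.C lj).inf' (G.C_ne lj hjV)
      (fun cj => G.tc lj cj + G.ts lj cj + G.tx e1 ci cj + G.tx e2 cj ck)

/-- after node elimination, for every strategy `S` on `G`, the total
cost of `S` on `G` is at least the total cost on `G'` of the restriction of `S`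
to `V \ {l_j}` (as a total function, `S` itself). -/
theorem node_elimination_cost_le {L Conf ε : Type} [DecidableEq L] [DecidableEq ε]
    (G G' : CompGraph L Conf ε) (li lj lk : L) (e1 e2 e' : ε)
    (h : NodeElim G G' li lj lk e1 e2 e')
    (S : L → Conf) (hS : G.IsStrategy S) :
    G'.cost S ≤ G.cost S := by
  classical
  have he12 : e1 ≠ e2 := fun heq => h.hij (by rw [← h.src1, heq, h.src2])
  have he2' : e2 ∈ G.E.erase e1 := Finset.mem_erase.mpr ⟨he12.symm, h.he2⟩
  have hfresh2 : e' ∉ (G.E.erase e1).erase e2 := fun hm =>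
    h.fresh (Finset.mem_of_mem_erase (Finset.mem_of_mem_erase hm))
  -- node sums
  have hnode : ∑ l ∈ G.V, (G.tc l (S l) + G.ts l (S l)) =
      (G.tc lj (S lj) + G.ts lj (S lj)) +
      ∑ l ∈ G.V.erase lj, (G.tc l (S l) + G.ts l (S l)) :=
    (Finset.add_sum_erase _ _ h.hjV).symm
  -- edge sums
  have hedge : ∑ e ∈ G.E, G.tx e (S (G.src e)) (S (G.dst e)) =
      G.tx e1 (S (G.src e1)) (S (G.dst e1)) +
      (G.tx e2 (S (G.src e2)) (S (G.dst e2)) +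
       ∑ e ∈ (G.E.erase e1).erase e2, G.tx e (S (G.src e)) (S (G.dst e))) := by
    rw [← Finset.add_sum_erase _ _ h.he1, ← Finset.add_sum_erase _ _ he2']
  -- the G' cost
  have hCost' : G'.cost S =
      ∑ l ∈ G.V.erase lj, (G.tc l (S l) + G.ts l (S l)) +
      (G'.tx e' (S li) (S lk) +
       ∑ e ∈ (G.E.erase e1).erase e2, G.tx e (S (G.src e)) (S (G.dst e))) := by
    unfold CompGraph.cost
    rw [h.V', h.E', h.tc', h.ts', Finset.sum_insert hfresh2, h.src'_new, h.dst'_new]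
    have hrest : ∀ e ∈ (G.E.erase e1).erase e2,
        G'.tx e (S (G'.src e)) (S (G'.dst e)) = G.tx e (S (G.src e)) (S (G.dst e)) := by
      intro e he
      have hne : e ≠ e' := fun heq => hfresh2 (heq ▸ he)
      rw [h.tx_eq e hne, h.src_eq e hne, h.dst_eq e hne]
    rw [Finset.sum_congr rfl hrest]
  have hinf : G'.tx e' (S li) (S lk) ≤
      G.tc lj (S lj) + G.ts lj (S lj) + G.tx e1 (S li) (S lj) + G.tx e2 (S lj) (S lk) := by
    rw [h.tx_new]
    exact Finset.inf'_le _ (hS lj h.hjV)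
  rw [hCost']
  unfold CompGraph.cost
  rw [hnode, hedge, h.src1, h.dst1, h.src2, h.dst2]
  linarith
end

section
/- Let G be a computation graph and suppose the layer l_j has exactly one in-edge e1 = (l_i, l_j) and exactly one out-edge e2 = (l_j, l_k) in G, with l_i, l_j, l_k pairwise distinct. Let G' be the graph obtained from G by node elimination at l_j: G' has layer set V \ {l_j}, edge multiset (E \ {e1, e2}) together with one new edge e' = (l_i, l_k), whose cost function is defined by t_x(e', c_i, c_k) = min over c_j in C(l_j) of [ t_c(l_j, c_j) + t_s(l_j, c_j) + t_x(e1, c_i, c_j) + t_x(e2, c_j, c_k) ]. Then for every strategy S' on G', if ĉ_j ∈ C(l_j) attains the minimum min_{c_j ∈ C(l_j)} [ t_c(l_j, c_j) + t_s(l_j, c_j) + t_x(e1, S'(l_i), c_j) + t_x(e2, c_j, S'(l_k)) ], the strategy S on G that agrees with S' on V \ {l_j} and assigns ĉ_j to l_j satisfies t_o(G, S) = t_o(G', S'). -/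
open Finset

/-- after node elimination, if `S'` is a strategy on `G'` and
`ĉ_j ∈ C(l_j)` attains the minimum defining `t_x(e', S'(l_i), S'(l_k))`, then the
strategy on `G` agreeing with `S'` off `l_j` and assigning `ĉ_j` to `l_j` has the
same total cost on `G` as `S'` has on `G'`. -/
theorem node_elimination_extend_cost_eq {L Conf ε : Type} [DecidableEq L] [DecidableEq ε]
    (G G' : CompGraph L Conf ε) (li lj lk : L) (e1 e2 e' : ε)
    (h : NodeElim G G' li lj lk e1 e2 e')
    (S' : L → Conf) (hS' : G'.IsStrategy S')
    (cj : Conf) (hcj : cj ∈ G.C lj)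
    (hmin : G.tc lj cj + G.ts lj cj + G.tx e1 (S' li) cj + G.tx e2 cj (S' lk) =
      (G.C lj).inf' (G.C_ne lj h.hjV)
        (fun c => G.tc lj c + G.ts lj c + G.tx e1 (S' li) c + G.tx e2 c (S' lk))) :
    G.cost (Function.update S' lj cj) = G'.cost S' := by
  classical
  obtain ⟨hij, hjk, hik, hjV, he1, he2, src1, dst1, src2, dst2, inu, outu, fresh,
    V', E', C', tc', ts', src'n, dst'n, srcq, dstq, txq, txn⟩ := h
  set S := Function.update S' lj cj with hSdef
  have hSj : S lj = cj := Function.update_self _ _ _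
  have hSne : ∀ l, l ≠ lj → S l = S' l := fun l hl => Function.update_of_ne hl _ _
  have he12 : e1 ≠ e2 := by
    intro hh; subst hh; exact hij (src1.symm.trans src2)
  have he1' : e1 ∈ G.E.erase e2 := Finset.mem_erase.mpr ⟨he12, he1⟩
  have hnode : ∑ l ∈ G.V, (G.tc l (S l) + G.ts l (S l))
      = (G.tc lj cj + G.ts lj cj) + ∑ l ∈ G'.V, (G'.tc l (S' l) + G'.ts l (S' l)) := by
    rw [← Finset.insert_erase hjV, Finset.sum_insert (Finset.notMem_erase _ _), hSj,
      V', tc', ts']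
    congr 1
    refine Finset.sum_congr rfl fun l hl => ?_
    rw [hSne l (Finset.ne_of_mem_erase hl)]
  have hrest : ∑ e ∈ (G.E.erase e1).erase e2, G.tx e (S (G.src e)) (S (G.dst e))
      = ∑ e ∈ (G.E.erase e1).erase e2, G'.tx e (S' (G'.src e)) (S' (G'.dst e)) := by
    refine Finset.sum_congr rfl fun e he => ?_
    have he2' : e ≠ e2 := (Finset.mem_erase.mp he).1
    have he1'' : e ≠ e1 := (Finset.mem_erase.mp (Finset.mem_erase.mp he).2).1
    have heE : e ∈ G.E := (Finset.mem_erase.mp (Finset.mem_erase.mp he).2).2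
    have hee' : e ≠ e' := fun hh => fresh (hh ▸ heE)
    have hsrc : G.src e ≠ lj := fun hh => he2' (outu e heE hh)
    have hdst : G.dst e ≠ lj := fun hh => he1'' (inu e heE hh)
    rw [txq e hee', srcq e hee', dstq e hee', hSne _ hsrc, hSne _ hdst]
  have hedgeG : ∑ e ∈ G.E, G.tx e (S (G.src e)) (S (G.dst e))
      = G.tx e1 (S' li) cj + G.tx e2 cj (S' lk)
        + ∑ e ∈ (G.E.erase e1).erase e2, G.tx e (S (G.src e)) (S (G.dst e)) := by
    conv_lhs => rw [← Finset.insert_erase he2, Finset.sum_insert (Finset.notMem_erase _ _),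
      ← Finset.insert_erase he1', Finset.sum_insert (Finset.notMem_erase _ _),
      Finset.erase_right_comm, src1, dst1, src2, dst2, hSj, hSne li hij,
      hSne lk (Ne.symm hjk)]
    ring
  have hE'ne : e' ∉ (G.E.erase e1).erase e2 := fun hh =>
    fresh (Finset.mem_of_mem_erase (Finset.mem_of_mem_erase hh))
  have hedgeG' : ∑ e ∈ G'.E, G'.tx e (S' (G'.src e)) (S' (G'.dst e))
      = G'.tx e' (S' li) (S' lk)
        + ∑ e ∈ (G.E.erase e1).erase e2, G'.tx e (S' (G'.src e)) (S' (G'.dst e)) := by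
    rw [E', Finset.sum_insert hE'ne, src'n, dst'n]
  have hkey : G'.tx e' (S' li) (S' lk)
      = G.tc lj cj + G.ts lj cj + G.tx e1 (S' li) cj + G.tx e2 cj (S' lk) := by
    rw [txn, ← hmin]
  unfold CompGraph.cost
  rw [hnode, hedgeG, hedgeG', hrest, hkey]
  ring
end

section
/- (Theorem 1, node elimination preserves optimal strategies.) Let G be a computation graph and suppose the layer l_j has exactly one in-edge e1 = (l_i, l_j) and exactly one out-edge e2 = (l_j, l_k) in G, with l_i, l_j, l_k pairwise distinct. Let G' be the graph obtained from G by node elimination at l_j: G' has layer set V \ {l_j}, edge multiset (E \ {e1, e2}) together with one new edge e' = (l_i, l_k), whose cost function is defined by t_x(e', c_i, c_k) = min over c_j in C(l_j) of [ t_c(l_j, c_j) + t_s(l_j, c_j) + t_x(e1, c_i, c_j) + t_x(e2, c_j, c_k) ]. If S' is an optimal strategy for G' and ĉ_j ∈ C(l_j) attains the minimum min_{c_j ∈ C(l_j)} [ t_c(l_j, c_j) + t_s(l_j, c_j) + t_x(e1, S'(l_i), c_j) + t_x(e2, c_j, S'(l_k)) ], then the strategy S on G that agrees with S' on V \ {l_j}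 and assigns ĉ_j to l_j is optimal for G. -/
open Finset

lemma NodeElim.e1_ne_e2 {L Conf ε : Type} [DecidableEq L] [DecidableEq ε]
    {G G' : CompGraph L Conf ε} {li lj lk : L} {e1 e2 e' : ε}
    (h : NodeElim G G' li lj lk e1 e2 e') : e1 ≠ e2 := by
  intro he
  exact h.hjk (h.dst1 ▸ he ▸ h.dst2)

lemma NodeElim.cost_split {L Conf ε : Type} [DecidableEq L] [DecidableEq ε]
    {G G' : CompGraph L Conf ε} {li lj lk : L} {e1 e2 e' : ε}
    (h : NodeElim G G' li lj lk e1 e2 e') (T : L → Conf) :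
    G.cost T = G'.cost T +
      (G.tc lj (T lj) + G.ts lj (T lj) + G.tx e1 (T li) (T lj) + G.tx e2 (T lj) (T lk))
      - G'.tx e' (T li) (T lk) := by
  have he2' : e2 ∈ G.E.erase e1 := Finset.mem_erase.2 ⟨(h.e1_ne_e2).symm, h.he2⟩
  have he'notin : e' ∉ (G.E.erase e1).erase e2 := fun hx =>
    h.fresh (Finset.mem_of_mem_erase (Finset.mem_of_mem_erase hx))
  have hnode : ∑ l ∈ G.V, (G.tc l (T l) + G.ts l (T l)) =
      (G.tc lj (T lj) + G.ts lj (T lj)) +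
      ∑ l ∈ G.V.erase lj, (G.tc l (T l) + G.ts l (T l)) :=
    (Finset.add_sum_erase _ _ h.hjV).symm
  have hedge : ∑ e ∈ G.E, G.tx e (T (G.src e)) (T (G.dst e)) =
      G.tx e1 (T (G.src e1)) (T (G.dst e1)) +
      (G.tx e2 (T (G.src e2)) (T (G.dst e2)) +
      ∑ e ∈ (G.E.erase e1).erase e2, G.tx e (T (G.src e)) (T (G.dst e))) := by
    rw [← Finset.add_sum_erase G.E _ h.he1, ← Finset.add_sum_erase (G.E.erase e1) _ he2']
  have hedge' : ∑ e ∈ G'.E, G'.tx e (T (G'.src e)) (T (G'.dst e)) =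
      G'.tx e' (T li) (T lk) +
      ∑ e ∈ (G.E.erase e1).erase e2, G.tx e (T (G.src e)) (T (G.dst e)) := by
    rw [h.E', Finset.sum_insert he'notin, h.src'_new, h.dst'_new]
    congr 1
    refine Finset.sum_congr rfl fun e he => ?_
    have hne : e ≠ e' := fun hx => he'notin (hx ▸ he)
    rw [h.tx_eq e hne, h.src_eq e hne, h.dst_eq e hne]
  have hnode' : ∑ l ∈ G'.V, (G'.tc l (T l) + G'.ts l (T l)) =
      ∑ l ∈ G.V.erase lj, (G.tc l (T l) + G.ts l (T l)) := by
    rw [h.V', h.tc', h.ts']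
  simp only [CompGraph.cost, hnode, hedge, hedge', hnode', h.src1, h.dst1, h.src2, h.dst2]
  ring

/-- Theorem 1: node elimination preserves optimal strategies.
If `S'` is optimal for `G'` and `ĉ_j` attains the minimum defining
`t_x(e', S'(l_i), S'(l_k))`, then the strategy agreeing with `S'` off `l_j` and
assigning `ĉ_j` to `l_j` is optimal for `G`. -/
theorem node_elimination_preserves_optimal {L Conf ε : Type} [DecidableEq L] [DecidableEq ε]
    (G G' : CompGraph L Conf ε) (li lj lk : L) (e1 e2 e' : ε)
    (h : NodeElim G G' li lj lk e1 e2 e')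
    (S' : L → Conf) (hS' : G'.Optimal S')
    (cj : Conf) (hcj : cj ∈ G.C lj)
    (hmin : G.tc lj cj + G.ts lj cj + G.tx e1 (S' li) cj + G.tx e2 cj (S' lk) =
      (G.C lj).inf' (G.C_ne lj h.hjV)
        (fun c => G.tc lj c + G.ts lj c + G.tx e1 (S' li) c + G.tx e2 c (S' lk))) :
    G.Optimal (Function.update S' lj cj) := by
  set S : L → Conf := Function.update S' lj cj with hS
  have hSli : S li = S' li := Function.update_of_ne h.hij _ _
  have hSlk : S lk = S' lk := Function.update_of_ne (Ne.symm h.hjk) _ _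
  have hSlj : S lj = cj := Function.update_self _ _ _
  -- cost of S on G' equals cost of S'
  have hcostG' : G'.cost S = G'.cost S' := by
    unfold CompGraph.cost
    congr 1
    · refine Finset.sum_congr rfl fun l hl => ?_
      rw [h.V'] at hl
      rw [hS, Function.update_of_ne (Finset.mem_erase.1 hl).1 _ _]
    · refine Finset.sum_congr rfl fun e he => ?_
      rw [h.E'] at he
      rcases Finset.mem_insert.1 he with rfl | he
      · rw [h.src'_new, h.dst'_new, hSli, hSlk]
      · have hne : e ≠ e' := fun hx => (by
          exact absurd (hx ▸ he) (by
            intro hx2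
            exact h.fresh (Finset.mem_of_mem_erase (Finset.mem_of_mem_erase hx2))))
        have heE : e ∈ G.E := Finset.mem_of_mem_erase (Finset.mem_of_mem_erase he)
        have hsrc : G'.src e ≠ lj := by
          rw [h.src_eq e hne]
          intro hx
          exact (Finset.mem_erase.1 he).1 (h.out_unique e heE hx)
        have hdst : G'.dst e ≠ lj := by
          rw [h.dst_eq e hne]
          intro hx
          exact (Finset.mem_erase.1 (Finset.mem_of_mem_erase he)).1 (h.in_unique e heE hx)
        rw [hS, Function.update_of_ne hsrc, Function.update_of_ne hdst]
  -- cost of S on G equals cost of S' on G'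
  have hcostG : G.cost S = G'.cost S' := by
    rw [h.cost_split S, hcostG', hSli, hSlk, hSlj, h.tx_new, ← hmin]
    ring
  constructor
  · intro l hl
    by_cases hlj : l = lj
    · subst hlj; rw [hSlj]; exact hcj
    · rw [hS, Function.update_of_ne hlj]
      have : l ∈ G'.V := by rw [h.V']; exact Finset.mem_erase.2 ⟨hlj, hl⟩
      have := hS'.1 l this
      rwa [h.C'] at this
  · intro S₁ hS₁
    have hS₁' : G'.IsStrategy S₁ := by
      intro l hl
      rw [h.V'] at hl
      rw [h.C']
      exact hS₁ l (Finset.mem_of_mem_erase hl)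
    have hbound : G'.tx e' (S₁ li) (S₁ lk) ≤
        G.tc lj (S₁ lj) + G.ts lj (S₁ lj) + G.tx e1 (S₁ li) (S₁ lj) +
          G.tx e2 (S₁ lj) (S₁ lk) := by
      rw [h.tx_new]
      exact Finset.inf'_le _ (hS₁ lj h.hjV)
    have h1 : G'.cost S₁ ≤ G.cost S₁ := by
      rw [h.cost_split S₁]; linarith
    calc G.cost S = G'.cost S' := hcostG
      _ ≤ G'.cost S₁ := hS'.2 S₁ hS₁'
      _ ≤ G.cost S₁ := h1
end

section
/- (Node elimination preserves the optimal cost.) Let G be a computation graph and suppose the layer l_j has exactly one in-edge e1 = (l_i, l_j) and exactly one out-edge e2 = (l_j, l_k) in G, with l_i, l_j, l_k pairwise distinct. Let G' be the graph obtained from G by node elimination at l_j: G' has layer set V \ {l_j}, edge multiset (E \ {e1, e2}) together with one new edge e' = (l_i, l_k), whose cost function is defined by t_x(e', c_i, c_k) = min over c_j in C(l_j) of [ t_c(l_j, c_j) + t_s(l_j, c_j) + t_x(e1, c_i, c_j) + t_x(e2, c_j, c_k) ]. Then the minimum of t_o(G, ·) over all strategies on G equals the minimum of t_o(G', ·) over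 all strategies on G'. -/
open Finset

namespace CompGraph
variable {L Conf ε : Type}

theorem cost_congr (G : CompGraph L Conf ε) {S S' : L → Conf}
    (h : ∀ l ∈ G.V, S l = S' l) : G.cost S = G.cost S' := by
  unfold cost
  congr 1
  · exact Finset.sum_congr rfl fun l hl => by rw [h l hl]
  · exact Finset.sum_congr rfl fun e he => by
      rw [h _ (G.src_mem e he), h _ (G.dst_mem e he)]

theorem exists_strategy (G : CompGraph L Conf ε) [DecidableEq L] (c0 : Conf) :
    ∃ S, G.IsStrategy S := by
  classical
  refine ⟨fun l => if h : l ∈ G.V then (G.C_ne l h).choose else c0, fun l hl => ?_⟩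
  simpa [dif_pos hl] using (G.C_ne l hl).choose_spec

theorem exists_isLeast [DecidableEq L] (G : CompGraph L Conf ε) (c0 : Conf)
    (hS0 : ∃ S, G.IsStrategy S) :
    ∃ m, IsLeast {x : ℝ | ∃ S, G.IsStrategy S ∧ G.cost S = x} m := by
  classical
  set T : Finset (L → Conf) := (G.V.pi G.C).image
    (fun f l => if h : l ∈ G.V then f l h else c0) with hT
  have hset : {x : ℝ | ∃ S, G.IsStrategy S ∧ G.cost S = x} = ↑(T.image G.cost) := by
    ext x
    simp only [Set.mem_setOf_eq, Finset.coe_image, Set.mem_image, Finset.mem_coe]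
    constructor
    · rintro ⟨S, hS, rfl⟩
      refine ⟨fun l => if h : l ∈ G.V then S l else c0, ?_, ?_⟩
      · rw [hT]; simp only [Finset.mem_image]
        exact ⟨fun l _ => S l, Finset.mem_pi.2 fun l hl => hS l hl, rfl⟩
      · exact (cost_congr G (fun l hl => by simp [hl])).symm
    · rintro ⟨g, hg, rfl⟩
      refine ⟨g, ?_, rfl⟩
      rw [hT] at hg
      simp only [Finset.mem_image] at hg
      obtain ⟨f, hf, rfl⟩ := hg
      intro l hl
      simp only [dif_pos hl]
      exact Finset.mem_pi.1 hf l hl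
  have hne : (T.image G.cost).Nonempty := by
    obtain ⟨S, hS⟩ := hS0
    have hx : G.cost S ∈ {x : ℝ | ∃ S, G.IsStrategy S ∧ G.cost S = x} := ⟨S, hS, rfl⟩
    rw [hset] at hx
    exact ⟨_, hx⟩
  refine ⟨(T.image G.cost).min' hne, ?_, ?_⟩
  · rw [hset]; exact (T.image G.cost).min'_mem hne
  · intro x hx
    rw [hset] at hx
    exact Finset.min'_le _ _ hx

end CompGraph

/-- node elimination preserves the optimal cost. The minimum of
`t_o(G, ·)` over all strategies on `G` equals the minimum of `t_o(G', ·)` over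
all strategies on `G'` (both minima exist). -/
theorem node_elimination_min_cost_eq {L Conf ε : Type} [DecidableEq L] [DecidableEq ε]
    (G G' : CompGraph L Conf ε) (li lj lk : L) (e1 e2 e' : ε)
    (h : NodeElim G G' li lj lk e1 e2 e') :
    ∃ m : ℝ, IsLeast {x : ℝ | ∃ S : L → Conf, G.IsStrategy S ∧ G.cost S = x} m ∧
      IsLeast {x : ℝ | ∃ S : L → Conf, G'.IsStrategy S ∧ G'.cost S = x} m := by
  classical
  obtain ⟨hij, hjk, hik, hjV, he1, he2, src1, dst1, src2, dst2, in_unique, out_unique,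
    fresh, V', E', C', tc', ts', src'_new, dst'_new, src_eq, dst_eq, tx_eq, tx_new⟩ := h
  set c0 : Conf := (G.C_ne lj hjV).choose with hc0
  have e12 : e1 ≠ e2 := fun he => hjk (by rw [← dst1, he, dst2])
  set E'' : Finset ε := (G.E.erase e1).erase e2 with hE''
  have he'E'' : e' ∉ E'' := fun he =>
    fresh (Finset.mem_of_mem_erase (Finset.mem_of_mem_erase he))
  have he2' : e2 ∈ G.E.erase e1 := Finset.mem_erase.2 ⟨e12.symm, he2⟩
  have hsrcE'' : ∀ e ∈ E'', G.src e ≠ lj := by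
    intro e he hs
    have hmem := Finset.mem_erase.1 he
    have hmem' := Finset.mem_erase.1 hmem.2
    exact hmem.1 (out_unique e hmem'.2 hs)
  have hdstE'' : ∀ e ∈ E'', G.dst e ≠ lj := by
    intro e he hs
    have hmem := Finset.mem_erase.1 he
    have hmem' := Finset.mem_erase.1 hmem.2
    exact hmem'.1 (in_unique e hmem'.2 hs)
  set A : (L → Conf) → ℝ := fun S => ∑ l ∈ G.V.erase lj, (G.tc l (S l) + G.ts l (S l)) with hA
  set B : (L → Conf) → ℝ := fun S => ∑ e ∈ E'', G.tx e (S (G.src e)) (S (G.dst e)) with hB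
  set f : Conf → Conf → Conf → ℝ := fun ci cj ck =>
    G.tc lj cj + G.ts lj cj + G.tx e1 ci cj + G.tx e2 cj ck with hf
  have costG : ∀ S, G.cost S = A S + B S + f (S li) (S lj) (S lk) := by
    intro S
    show (∑ l ∈ G.V, (G.tc l (S l) + G.ts l (S l))) +
      (∑ e ∈ G.E, G.tx e (S (G.src e)) (S (G.dst e))) = _
    rw [← Finset.sum_erase_add G.V _ hjV, ← Finset.sum_erase_add G.E _ he1,
        ← Finset.sum_erase_add (G.E.erase e1) _ he2', src1, dst1, src2, dst2]
    simp only [hA, hB, hf, hE'']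
    ring
  have costG' : ∀ S, G'.cost S = A S + B S +
      (G.C lj).inf' (G.C_ne lj hjV) (fun cj => f (S li) cj (S lk)) := by
    intro S
    show (∑ l ∈ G'.V, (G'.tc l (S l) + G'.ts l (S l))) +
      (∑ e ∈ G'.E, G'.tx e (S (G'.src e)) (S (G'.dst e))) = _
    rw [V', E', tc', ts', Finset.sum_insert he'E'', src'_new, dst'_new, tx_new]
    have hrest : ∑ e ∈ E'', G'.tx e (S (G'.src e)) (S (G'.dst e)) = B S := by
      refine Finset.sum_congr rfl fun e he => ?_
      have hne : e ≠ e' := fun hh => he'E'' (hh ▸ he)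
      rw [tx_eq e hne, src_eq e hne, dst_eq e hne]
    rw [hrest]
    simp only [hA, hf]
    ring
  have dir1 : ∀ S, G.IsStrategy S → G'.IsStrategy S ∧ G'.cost S ≤ G.cost S := by
    intro S hS
    constructor
    · intro l hl
      rw [V'] at hl
      rw [C']
      exact hS l (Finset.mem_of_mem_erase hl)
    · rw [costG, costG']
      have := Finset.inf'_le (fun cj => f (S li) cj (S lk)) (hS lj hjV)
      linarith
  have dir2 : ∀ S', G'.IsStrategy S' → ∃ S, G.IsStrategy S ∧ G.cost S = G'.cost S' := by
    intro S' hS'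
    obtain ⟨cj, hcj, hinf⟩ :=
      Finset.exists_mem_eq_inf' (G.C_ne lj hjV) (fun c => f (S' li) c (S' lk))
    refine ⟨Function.update S' lj cj, ?_, ?_⟩
    · intro l hl
      by_cases hlj : l = lj
      · subst hlj
        rw [Function.update_self]
        exact hcj
      · rw [Function.update_of_ne hlj]
        have : l ∈ G'.V := V' ▸ Finset.mem_erase.2 ⟨hlj, hl⟩
        have := hS' l this
        rwa [C'] at this
    · rw [costG, costG']
      have hAeq : A (Function.update S' lj cj) = A S' := by
        refine Finset.sum_congr rfl fun l hl => ?_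
        rw [Function.update_of_ne (Finset.mem_erase.1 hl).1]
      have hBeq : B (Function.update S' lj cj) = B S' := by
        refine Finset.sum_congr rfl fun e he => ?_
        rw [Function.update_of_ne (hsrcE'' e he), Function.update_of_ne (hdstE'' e he)]
      rw [hAeq, hBeq, Function.update_of_ne hij,
        Function.update_of_ne hjk.symm, Function.update_self, ← hinf]
  obtain ⟨S0, hS0⟩ := CompGraph.exists_strategy G c0
  obtain ⟨m, hm⟩ := CompGraph.exists_isLeast G c0 ⟨S0, hS0⟩
  obtain ⟨m', hm'⟩ := CompGraph.exists_isLeast G' c0 ⟨S0, (dir1 S0 hS0).1⟩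
  have hle1 : m ≤ m' := by
    obtain ⟨S', hS', hc⟩ := hm'.1
    obtain ⟨S, hS, hcc⟩ := dir2 S' hS'
    calc m ≤ G.cost S := hm.2 ⟨S, hS, rfl⟩
      _ = m' := by rw [hcc, hc]
  have hle2 : m' ≤ m := by
    obtain ⟨S, hS, hc⟩ := hm.1
    have := dir1 S hS
    calc m' ≤ G'.cost S := hm'.2 ⟨S, this.1, rfl⟩
      _ ≤ m := hc ▸ this.2
  have : m = m' := le_antisymm hle1 hle2
  exact ⟨m, hm, this ▸ hm'⟩
end
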